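/- arXiv:2603.15124 — 5 statements merged into one kernel-verified Lean document; each statement's English description precedes it below -/
import Mathlib

section
/- Let a > 0, let n be a positive integer, let t_1 < t_2 < ⋯ < t_n be real numbers, and let θ_1, …, θ_n be real. For 1 ≤ i ≤ j ≤ n define a_{ij} := E(t_j − t_i) − E(t_{j+1} − t_i) − E(t_j − t_{i−1}) + E(t_{j+1} − t_{i−1}), where E(s) := e^{−a s} for arguments built from indices in {1, …, n}, and where any term involving the index 0 or the index n+1 (i.e. involving t_0 or t_{n+1}) is set equal to 0 (corresponding to the conventions t_0 = −∞ and t_{n+1} = +∞). Then ∑_{1 ≤ i ≤ j ≤ n} (θ_i + ⋯ + θ_j)^2 · a_{ij} = ∑_{i=1}^n θ_i^2 + 2 ∑_{1 ≤ i < j ≤ n} θ_i θ_j e^{−a(t_j − t_i)}. Consequently the Ornstein–Uhlenbeck Gaussian characteristic exponent −(1/(4a)) ∑_{i=1}^n θ_i^2 − (1/(2a)) ∑_{1 ≤ i < j ≤ n} θ_i θ_j e^{−a(t_j − t_i)} equals −(1/(4a)) ∑_{1 ≤ i ≤ j ≤ n} (θ_i + ⋯ + θ_j)^2 · a'_{ij},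 where a'_{ij} := (1 − e^{−a(t_j − t_{i−1})}) − (1 − e^{−a(t_j − t_i)}) − (1 − e^{−a(t_{j+1} − t_{i−1})}) + (1 − e^{−a(t_{j+1} − t_i)}) with the same boundary conventions (terms 1 − e^{−a(·)} involving t_0 or t_{n+1} are set equal to 1). -/
/-!
With the conventions `t 0 = -∞`, `t (n + 1) = +∞`, the numbers `e^{-a (t j - t i)}` form a kernel
`B i j` that vanishes for `i = 0` and for `j = n + 1`, and `a_{ij}` is its rectangular second
difference. Expanding `(θ_i + ⋯ + θ_j)^2`, the coefficient of `θ_k θ_l` is the sum of these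
differences over all `i ≤ min k l` and `j ≥ max k l`, which telescopes in both indices to
`B (min k l) (max k l)`. Splitting the resulting symmetric double sum into its diagonal
(where `B k k = 1`) and twice its upper triangle gives the first identity. In `a'_{ij}` the
constants `1` cancel, so `a'_{ij} = a_{ij}` and the second identity is a rescaling of the first.
-/

open Finset

section Telescoping

variable {M : Type*} [AddCommGroup M]

def rectDiff (B : ℕ → ℕ → M) (i j : ℕ) : M :=
  B i j - B i (j + 1) - B (i - 1) j + B (i - 1) (j + 1)

theorem sum_Icc_one_sub_pred (f : ℕ → M) (p : ℕ) :
    ∑ i ∈ Icc 1 p, (f i - f (i - 1)) = f p - f 0 := by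
  induction p with
  | zero => simp
  | succ p ih => rw [sum_Icc_succ_top (by omega), ih, Nat.add_sub_cancel]; abel

theorem sum_Icc_sum_Icc_rectDiff (B : ℕ → ℕ → M) {q n : ℕ} (hq : q ≤ n) (p : ℕ) :
    ∑ i ∈ Icc 1 p, ∑ j ∈ Icc q n, rectDiff B i j
      = B p q - B p (n + 1) - B 0 q + B 0 (n + 1) := by
  have inner : ∀ i, ∑ j ∈ Icc q n, rectDiff B i j
      = (B i q - B i (n + 1)) - (B (i - 1) q - B (i - 1) (n + 1)) := by
    intro i
    have := sum_Icc_sub hq (fun j => B (i - 1) j - B i j)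
    rw [← neg_inj, ← sum_neg_distrib] at this ⊢
    simp only [rectDiff]
    convert this using 2 <;> abel
  simp_rw [inner]
  rw [sum_Icc_one_sub_pred (fun i => B i q - B i (n + 1))]
  abel

end Telescoping

theorem sum_Icc_subinterval_comm {M : Type*} [AddCommMonoid M] (n : ℕ)
    (f : ℕ → ℕ → ℕ → ℕ → M) :
    ∑ i ∈ Icc 1 n, ∑ j ∈ Icc i n, ∑ k ∈ Icc i j, ∑ l ∈ Icc i j, f i j k l
      = ∑ k ∈ Icc 1 n, ∑ l ∈ Icc 1 n, ∑ i ∈ Icc 1 (min k l), ∑ j ∈ Icc (max k l) n,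
          f i j k l := by
  calc _ = ∑ i ∈ Icc 1 n, ∑ k ∈ Icc i n, ∑ l ∈ Icc i n, ∑ j ∈ Icc (max k l) n, f i j k l := by
        refine sum_congr rfl fun i _ => ?_
        rw [sum_comm' (t' := Icc i n) (s' := fun k => Icc k n)
          (by intros; simp only [mem_Icc]; omega)]
        exact sum_congr rfl fun k _ => sum_comm' (by intros; simp only [mem_Icc]; omega)
    _ = _ := by
        rw [sum_comm' (t' := Icc 1 n) (s' := fun k => Icc 1 k)
          (by intros; simp only [mem_Icc]; omega)]
        exact sum_congr rfl fun k _ => sum_comm' (by intros; simp only [mem_Icc]; omega)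

theorem sum_Icc_sum_Icc_of_symm {R : Type*} [CommRing R] (f : ℕ → ℕ → R)
    (hf : ∀ k l, f k l = f l k) (m n : ℕ) :
    ∑ k ∈ Icc m n, ∑ l ∈ Icc m n, f k l
      = ∑ k ∈ Icc m n, f k k + 2 * ∑ k ∈ Icc m n, ∑ l ∈ Icc (k + 1) n, f k l := by
  induction n with
  | zero => rcases m with _ | m <;> simp
  | succ n ih =>
    by_cases hmn : m ≤ n + 1
    · have row : ∀ k ∈ Icc m n, ∑ l ∈ Icc (k + 1) (n + 1), f k l
          = ∑ l ∈ Icc (k + 1) n, f k l + f k (n + 1) := fun k hk =>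
        sum_Icc_succ_top (by simp only [mem_Icc] at hk; omega) _
      simp only [sum_Icc_succ_top hmn, sum_add_distrib, sum_congr rfl row, ih]
      simp only [show ¬ n + 1 + 1 ≤ n + 1 by omega, Icc_eq_empty, not_false_eq_true, sum_empty]
      simp_rw [hf (n + 1)]
      ring
    · simp [Icc_eq_empty hmn]

theorem sum_Icc_sq_sum_Icc_mul_rectDiff {R : Type*} [CommRing R] (n : ℕ) (θ : ℕ → R)
    (B : ℕ → ℕ → R) (hB₀ : ∀ j, B 0 j = 0) (hB₁ : ∀ i, B i (n + 1) = 0) :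
    ∑ i ∈ Icc 1 n, ∑ j ∈ Icc i n, (∑ m ∈ Icc i j, θ m) ^ 2 * rectDiff B i j
      = ∑ k ∈ Icc 1 n, ∑ l ∈ Icc 1 n, θ k * θ l * B (min k l) (max k l) := by
  simp_rw [sq, sum_mul_sum, sum_mul, sum_Icc_subinterval_comm, ← mul_sum]
  refine sum_congr rfl fun k hk => sum_congr rfl fun l hl => ?_
  rw [sum_Icc_sum_Icc_rectDiff B (by simp only [mem_Icc] at hk hl; omega), hB₀, hB₁, hB₁]
  simp

/-- `e^{-a (t j - t i)}`, with the conventions `t 0 = -∞` and `t (n + 1) = +∞`. -/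
noncomputable def ouKernel (a : ℝ) (t : ℕ → ℝ) (n i j : ℕ) : ℝ :=
  if 1 ≤ i ∧ j ≤ n then Real.exp (-a * (t j - t i)) else 0

theorem rectDiff_ouKernel {a : ℝ} {t : ℕ → ℝ} {n i j : ℕ} (hi : 1 ≤ i) (hj : j ≤ n) :
    rectDiff (ouKernel a t n) i j = Real.exp (-a * (t j - t i))
        - (if j = n then 0 else Real.exp (-a * (t (j + 1) - t i)))
        - (if i = 1 then 0 else Real.exp (-a * (t j - t (i - 1))))
        + (if i = 1 ∨ j = n then 0 else Real.exp (-a * (t (j + 1) - t (i - 1)))) := by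
  simp only [rectDiff, ouKernel]
  split_ifs <;> first | rfl | omega

theorem sum_Icc_sq_sum_Icc_mul_rectDiff_ouKernel (a : ℝ) (t θ : ℕ → ℝ) (n : ℕ) :
    ∑ i ∈ Icc 1 n, ∑ j ∈ Icc i n, (∑ m ∈ Icc i j, θ m) ^ 2 * rectDiff (ouKernel a t n) i j
      = ∑ i ∈ Icc 1 n, θ i ^ 2
        + 2 * ∑ i ∈ Icc 1 n, ∑ j ∈ Icc (i + 1) n, θ i * θ j * Real.exp (-a * (t j - t i)) := by
  rw [sum_Icc_sq_sum_Icc_mul_rectDiff n θ _ (by simp [ouKernel]) (by simp [ouKernel]),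
    sum_Icc_sum_Icc_of_symm _ (fun k l => by rw [mul_comm (θ k), min_comm, max_comm])]
  congr 1
  · refine sum_congr rfl fun k hk => ?_
    simp only [mem_Icc] at hk
    simp [ouKernel, hk.1, hk.2, sq]
  · refine congrArg _ (sum_congr rfl fun k hk => sum_congr rfl fun l hl => ?_)
    simp only [mem_Icc] at hk hl
    simp [ouKernel, min_eq_left (show k ≤ l by omega), max_eq_right (show k ≤ l by omega),
      hk.1, hl.2]

theorem OU_characteristic_exponent_rewriting_general
    (a : ℝ) (n : ℕ) (t : ℕ → ℝ)
    (θ : ℕ → ℝ)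
    (A A' : ℕ → ℕ → ℝ)
    (hA : ∀ i j, 1 ≤ i → i ≤ j → j ≤ n →
      A i j = Real.exp (-a * (t j - t i))
        - (if j = n then 0 else Real.exp (-a * (t (j + 1) - t i)))
        - (if i = 1 then 0 else Real.exp (-a * (t j - t (i - 1))))
        + (if i = 1 ∨ j = n then 0 else Real.exp (-a * (t (j + 1) - t (i - 1)))))
    (hA' : ∀ i j, 1 ≤ i → i ≤ j → j ≤ n →
      A' i j = (if i = 1 then 1 else 1 - Real.exp (-a * (t j - t (i - 1))))
        - (1 - Real.exp (-a * (t j - t i)))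
        - (if i = 1 ∨ j = n then 1 else 1 - Real.exp (-a * (t (j + 1) - t (i - 1))))
        + (if j = n then 1 else 1 - Real.exp (-a * (t (j + 1) - t i)))) :
    (∑ i ∈ Icc 1 n, ∑ j ∈ Icc i n, (∑ m ∈ Icc i j, θ m) ^ 2 * A i j
        = ∑ i ∈ Icc 1 n, θ i ^ 2
          + 2 * ∑ i ∈ Icc 1 n, ∑ j ∈ Icc (i + 1) n,
              θ i * θ j * Real.exp (-a * (t j - t i)))
    ∧ (-(1 / (4 * a)) * ∑ i ∈ Icc 1 n, θ i ^ 2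
          - (1 / (2 * a)) * ∑ i ∈ Icc 1 n, ∑ j ∈ Icc (i + 1) n,
              θ i * θ j * Real.exp (-a * (t j - t i))
        = -(1 / (4 * a)) * ∑ i ∈ Icc 1 n, ∑ j ∈ Icc i n,
            (∑ m ∈ Icc i j, θ m) ^ 2 * A' i j) := by
  have hA_rect : ∀ i ∈ Icc 1 n, ∀ j ∈ Icc i n, A i j = rectDiff (ouKernel a t n) i j := by
    intro i hi j hj
    simp only [mem_Icc] at hi hj
    rw [hA i j hi.1 hj.1 hj.2, rectDiff_ouKernel hi.1 hj.2]
  have hA'_eq_hA : ∀ i ∈ Icc 1 n, ∀ j ∈ Icc i n, A' i j = A i j := by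
    intro i hi j hj
    simp only [mem_Icc] at hi hj
    rw [hA' i j hi.1 hj.1 hj.2, hA i j hi.1 hj.1 hj.2]
    split_ifs <;> ring
  have quadratic_form : ∑ i ∈ Icc 1 n, ∑ j ∈ Icc i n, (∑ m ∈ Icc i j, θ m) ^ 2 * A i j
      = ∑ i ∈ Icc 1 n, θ i ^ 2
        + 2 * ∑ i ∈ Icc 1 n, ∑ j ∈ Icc (i + 1) n, θ i * θ j * Real.exp (-a * (t j - t i)) := by
    rw [← sum_Icc_sq_sum_Icc_mul_rectDiff_ouKernel]
    exact sum_congr rfl fun i hi => sum_congr rfl fun j hj => by rw [hA_rect i hi j hj]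
  have quadratic_form' : ∑ i ∈ Icc 1 n, ∑ j ∈ Icc i n, (∑ m ∈ Icc i j, θ m) ^ 2 * A' i j
      = ∑ i ∈ Icc 1 n, ∑ j ∈ Icc i n, (∑ m ∈ Icc i j, θ m) ^ 2 * A i j :=
    sum_congr rfl fun i hi => sum_congr rfl fun j hj => by rw [hA'_eq_hA i hi j hj]
  refine ⟨quadratic_form, ?_⟩
  rw [quadratic_form', quadratic_form]
  ring

/-- The Ornstein--Uhlenbeck covariance quadratic form identity.
Boundary conventions: terms `e^{-a(·)}` involving `t 0` or `t (n+1)` are set to `0`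
(in `A`), and terms `1 - e^{-a(·)}` involving them are set to `1` (in `A'`). -/
theorem OU_characteristic_exponent_rewriting
    (a : ℝ) (ha : 0 < a) (n : ℕ) (hn : 0 < n) (t : ℕ → ℝ)
    (ht : ∀ i, 1 ≤ i → i < n → t i < t (i + 1)) (θ : ℕ → ℝ)
    (A A' : ℕ → ℕ → ℝ)
    (hA : ∀ i j, 1 ≤ i → i ≤ j → j ≤ n →
      A i j = Real.exp (-a * (t j - t i))
        - (if j = n then 0 else Real.exp (-a * (t (j + 1) - t i)))
        - (if i = 1 then 0 else Real.exp (-a * (t j - t (i - 1))))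
        + (if i = 1 ∨ j = n then 0 else Real.exp (-a * (t (j + 1) - t (i - 1)))))
    (hA' : ∀ i j, 1 ≤ i → i ≤ j → j ≤ n →
      A' i j = (if i = 1 then 1 else 1 - Real.exp (-a * (t j - t (i - 1))))
        - (1 - Real.exp (-a * (t j - t i)))
        - (if i = 1 ∨ j = n then 1 else 1 - Real.exp (-a * (t (j + 1) - t (i - 1))))
        + (if j = n then 1 else 1 - Real.exp (-a * (t (j + 1) - t i)))) :
    (∑ i ∈ Icc 1 n, ∑ j ∈ Icc i n, (∑ m ∈ Icc i j, θ m) ^ 2 * A i j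
        = ∑ i ∈ Icc 1 n, θ i ^ 2
          + 2 * ∑ i ∈ Icc 1 n, ∑ j ∈ Icc (i + 1) n,
              θ i * θ j * Real.exp (-a * (t j - t i)))
    ∧ (-(1 / (4 * a)) * ∑ i ∈ Icc 1 n, θ i ^ 2
          - (1 / (2 * a)) * ∑ i ∈ Icc 1 n, ∑ j ∈ Icc (i + 1) n,
              θ i * θ j * Real.exp (-a * (t j - t i))
        = -(1 / (4 * a)) * ∑ i ∈ Icc 1 n, ∑ j ∈ Icc i n,
            (∑ m ∈ Icc i j, θ m) ^ 2 * A' i j) :=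
  OU_characteristic_exponent_rewriting_general a n t θ A A' hA hA'
end

section
/- Let ν be a measure on (0, ∞) with ∫_0^∞ y ν(dy) < ∞. For each n ∈ ℕ let λ_{n1}, …, λ_{nn} ≥ 0 and r_{n1}, …, r_{nn} > 0 be given. Assume: (i) for every x > 0 with ν({x}) = 0, ∑_{j=1}^n λ_{nj} 1(r_{nj} ≥ x) → ν([x, ∞)) as n → ∞; (ii) for every x > 0 with ν({x}) = 0, ∑_{j=1}^n λ_{nj} r_{nj} 1(r_{nj} ≥ x) → ∫_{[x,∞)} y ν(dy) as n → ∞; and (iii) ∑_{j=1}^n λ_{nj} r_{nj} → ∫_0^∞ y ν(dy) as n → ∞. Then for every θ ∈ ℝ, ∑_{j=1}^n λ_{nj} (e^{iθ r_{nj}} − 1) → ∫_0^∞ (e^{iθ y} − 1) ν(dy) as n → ∞. -/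
/-
Writing `e^{iθy} - 1 = ∫_0^y iθ e^{iθx} dx` and applying Fubini, every measure `μ` with finite
first moment on `(0, ∞)` satisfies `∫ (e^{iθy} - 1) μ(dy) = ∫_0^∞ μ[x, ∞) iθ e^{iθx} dx`. The
empirical sums are the left side for `μ = ν_n = ∑_j λ_{nj} δ_{r_{nj}}`, so the error is at most
`|θ| ∫_0^∞ |F_n - F|` for the tails `F_n x = ν_n[x, ∞)`, `F x = ν[x, ∞)`. By (i), `F_n → F` off
the countably many atoms of `ν`, i.e. almost everywhere, and by (iii) and the same identity with
`iθ e^{iθx}` replaced by `1`, `∫ F_n = ∑_j λ_{nj} r_{nj} → ∫ y ν(dy) = ∫ F`. Scheffé's lemma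
then gives `F_n → F` in `L¹`.
-/

open Finset Filter MeasureTheory
open scoped ENNReal Topology

lemma tendsto_integral_abs_sub_of_tendsto_integral {α ι : Type*} [MeasurableSpace α]
    {ν : Measure α} {l : Filter ι} [l.IsCountablyGenerated] {F : ι → α → ℝ} {f : α → ℝ}
    (hF : ∀ i, Integrable (F i) ν) (hf : Integrable f ν) (hF_nonneg : ∀ i, 0 ≤ᵐ[ν] F i)
    (hlim : ∀ᵐ x ∂ν, Tendsto (fun i => F i x) l (𝓝 (f x)))
    (hint : Tendsto (fun i => ∫ x, F i x ∂ν) l (𝓝 (∫ x, f x ∂ν))) :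
    Tendsto (fun i => ∫ x, |F i x - f x| ∂ν) l (𝓝 0) := by
  have hneg : Tendsto (fun i => ∫ x, max (f x - F i x) 0 ∂ν) l (𝓝 0) := by
    have := tendsto_integral_filter_of_dominated_convergence (fun x => |f x|)
      (.of_forall fun i => (hf.sub (hF i)).pos_part.aestronglyMeasurable)
      (.of_forall fun i => (hF_nonneg i).mono fun x hx => by
        change ‖max (f x - F i x) 0‖ ≤ |f x|
        rw [Real.norm_eq_abs, abs_of_nonneg (le_max_right _ _)]
        exact max_le (by linarith [le_abs_self (f x), show 0 ≤ F i x from hx]) (abs_nonneg _))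
      hf.abs (hlim.mono fun x hx => by
        simpa using ((tendsto_const_nhds (x := f x)).sub hx).max tendsto_const_nhds)
    simpa using this
  have hsplit (i : ι) : ∫ x, |F i x - f x| ∂ν =
      (∫ x, F i x ∂ν - ∫ x, f x ∂ν) + 2 * ∫ x, max (f x - F i x) 0 ∂ν := by
    have hdiff : Integrable (fun x => F i x - f x) ν := (hF i).sub hf
    have hpos : Integrable (fun x => 2 * max (f x - F i x) 0) ν :=
      (hf.sub (hF i)).pos_part.const_mul 2
    rw [← integral_sub (hF i) hf, ← integral_const_mul, ← integral_add hdiff hpos]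
    congr 1 with x
    rcases le_total (f x) (F i x) with h | h
    · rw [abs_of_nonneg (sub_nonneg.2 h), max_eq_right (sub_nonpos.2 h)]; ring
    · rw [abs_of_nonpos (sub_nonpos.2 h), max_eq_left (sub_nonneg.2 h)]; ring
  simpa [hsplit] using (hint.sub_const (∫ x, f x ∂ν)).add (hneg.const_mul 2)

lemma ae_measure_singleton_eq_zero {α : Type*} [MeasurableSpace α] [MeasurableSingletonClass α]
    (μ : Measure α) [SFinite μ] (ρ : Measure α) [NullSingletonClass ρ] : ∀ᵐ x ∂ρ, μ {x} = 0 := by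
  have hatoms : {x : α | 0 < μ {x}}.Countable := by
    simpa [Set.ofPred_eq_eq_singleton] using
      Measure.countable_meas_level_set_pos (μ := μ) measurable_id
  simpa [ae_iff, pos_iff_ne_zero] using hatoms.measure_zero ρ

lemma integral_Ioc_mul_cexp (c : ℂ) {y : ℝ} (hy : 0 ≤ y) :
    ∫ x in Set.Ioc 0 y, c * Complex.exp (c * x) = Complex.exp (c * y) - 1 := by
  rw [← intervalIntegral.integral_of_le hy]
  rcases eq_or_ne c 0 with rfl | hc
  · simp
  · rw [intervalIntegral.integral_const_mul, integral_exp_mul_complex hc, Complex.ofReal_zero,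
      mul_zero, Complex.exp_zero]
    field_simp

lemma norm_I_mul_mul_cexp (θ x : ℝ) :
    ‖Complex.I * θ * Complex.exp (Complex.I * θ * x)‖ = |θ| := by
  simp [Complex.norm_exp]

section Tail

variable {μ : Measure ℝ}

lemma measure_Ici_lt_top_of_integrableOn_Ioi (hμ : IntegrableOn (fun y => y) (Set.Ioi 0) μ)
    {a : ℝ} (ha : 0 < a) : μ (Set.Ici a) < ∞ := by
  have h := hμ.measure_ge_lt_top ha
  rwa [Measure.restrict_apply' measurableSet_Ioi, show {y | a ≤ y} ∩ Set.Ioi 0 = Set.Ici a from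
    Set.inter_eq_left.2 (Set.Ici_subset_Ioi.2 ha)] at h

lemma sigmaFinite_restrict_Ioi_of_integrableOn (hμ : IntegrableOn (fun y => y) (Set.Ioi 0) μ) :
    SigmaFinite (μ.restrict (Set.Ioi 0)) := by
  refine ⟨⟨⟨fun n => Set.Iic 0 ∪ Set.Ici (1 / (n + 1) : ℝ), fun _ => Set.mem_univ _,
    fun n => ?_, ?_⟩⟩⟩
  · refine (measure_union_le _ _).trans_lt (ENNReal.add_lt_top.2 ⟨?_, ?_⟩)
    · simp [Measure.restrict_apply' measurableSet_Ioi, Set.Iic_inter_Ioi]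
    · exact (Measure.restrict_apply_le _ _).trans_lt
        (measure_Ici_lt_top_of_integrableOn_Ioi hμ (by positivity))
  · refine Set.eq_univ_of_forall fun x => Set.mem_iUnion.2 ?_
    rcases le_or_gt x 0 with hx | hx
    · exact ⟨0, Or.inl hx⟩
    · obtain ⟨n, hn⟩ := exists_nat_one_div_lt hx
      exact ⟨n, Or.inr hn.le⟩

section Fubini

def underDiagonal : Set (ℝ × ℝ) := {p | p.1 ∈ Set.Ioc 0 p.2}

lemma measurableSet_underDiagonal : MeasurableSet underDiagonal :=
  (measurableSet_lt measurable_const measurable_fst).inter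
    (measurableSet_le measurable_fst measurable_snd)

variable {E : Type*} [NormedAddCommGroup E] {g : ℝ → E} {C : ℝ}

lemma integrable_indicator_underDiagonal_prod (hμ : IntegrableOn (fun y => y) (Set.Ioi 0) μ)
    (hg : StronglyMeasurable g) (hC : ∀ x, ‖g x‖ ≤ C) :
    Integrable (underDiagonal.indicator fun p => g p.1)
      ((volume.restrict (Set.Ioi 0)).prod (μ.restrict (Set.Ioi 0))) := by
  have hfin : (volume.restrict (Set.Ioi 0)).prod (μ.restrict (Set.Ioi 0)) underDiagonal < ∞ := by
    have hvol (y : ℝ) : volume.restrict (Set.Ioi 0) (Set.Ioc 0 y) = ENNReal.ofReal y := by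
      rw [Measure.restrict_apply measurableSet_Ioc,
        Set.inter_eq_left.2 Set.Ioc_subset_Ioi_self, Real.volume_Ioc, sub_zero]
    have := sigmaFinite_restrict_Ioi_of_integrableOn hμ
    rw [Measure.prod_apply_symm measurableSet_underDiagonal]
    simpa only [underDiagonal, Set.preimage_ofPred_eq, Set.ofPred_mem_eq, hvol]
      using hμ.lintegral_lt_top
  rw [integrable_indicator_iff measurableSet_underDiagonal]
  exact Measure.integrableOn_of_bounded hfin.ne
    (hg.comp_measurable measurable_fst).aestronglyMeasurable (.of_forall fun p => hC p.1)

variable [NormedSpace ℝ E]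

lemma integral_fst_indicator_underDiagonal (y : ℝ) :
    ∫ x in Set.Ioi 0, (underDiagonal.indicator fun p => g p.1) (x, y) =
      ∫ x in Set.Ioc 0 y, g x := by
  rw [← integral_indicator measurableSet_Ioc, ← integral_indicator measurableSet_Ioi]
  congr 1 with x
  by_cases hx : 0 < x <;> simp [underDiagonal, Set.indicator_apply, hx]

variable [CompleteSpace E]

lemma integral_snd_indicator_underDiagonal {x : ℝ} (hx : 0 < x) :
    ∫ y in Set.Ioi 0, (underDiagonal.indicator fun p => g p.1) (x, y) ∂μ =
      μ.real (Set.Ici x) • g x := by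
  have hsec : (fun y => (underDiagonal.indicator fun p => g p.1) (x, y)) =
      (Set.Ici x).indicator fun _ => g x := by
    ext y
    simp [underDiagonal, Set.indicator_apply, hx]
  rw [hsec, integral_indicator_const _ measurableSet_Ici,
    measureReal_restrict_apply measurableSet_Ici, Set.inter_eq_left.2 (Set.Ici_subset_Ioi.2 hx)]

lemma integrableOn_measureReal_Ici_smul (hμ : IntegrableOn (fun y => y) (Set.Ioi 0) μ)
    (hg : StronglyMeasurable g) (hC : ∀ x, ‖g x‖ ≤ C) :
    IntegrableOn (fun x => μ.real (Set.Ici x) • g x) (Set.Ioi 0) := by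
  have := sigmaFinite_restrict_Ioi_of_integrableOn hμ
  exact (integrable_indicator_underDiagonal_prod hμ hg hC).integral_prod_left.congr <|
    (ae_restrict_mem measurableSet_Ioi).mono fun _ hx => integral_snd_indicator_underDiagonal hx

lemma integral_Ioi_measureReal_Ici_smul (hμ : IntegrableOn (fun y => y) (Set.Ioi 0) μ)
    (hg : StronglyMeasurable g) (hC : ∀ x, ‖g x‖ ≤ C) :
    ∫ x in Set.Ioi 0, μ.real (Set.Ici x) • g x =
      ∫ y in Set.Ioi 0, (∫ x in Set.Ioc 0 y, g x) ∂μ := by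
  have := sigmaFinite_restrict_Ioi_of_integrableOn hμ
  have hH := integrable_indicator_underDiagonal_prod hμ hg hC
  calc ∫ x in Set.Ioi 0, μ.real (Set.Ici x) • g x
      = ∫ x in Set.Ioi 0, ∫ y in Set.Ioi 0,
          (underDiagonal.indicator fun p => g p.1) (x, y) ∂μ :=
        setIntegral_congr_fun measurableSet_Ioi fun _ hx =>
          (integral_snd_indicator_underDiagonal hx).symm
    _ = ∫ y in Set.Ioi 0, (∫ x in Set.Ioi 0,
          (underDiagonal.indicator fun p => g p.1) (x, y)) ∂μ := by
        rw [← integral_prod _ hH, integral_prod_symm _ hH]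
    _ = ∫ y in Set.Ioi 0, (∫ x in Set.Ioc 0 y, g x) ∂μ :=
        integral_congr_ae (.of_forall fun y => integral_fst_indicator_underDiagonal (g := g) y)

end Fubini

lemma integrableOn_measureReal_Ici (hμ : IntegrableOn (fun y => y) (Set.Ioi 0) μ) :
    IntegrableOn (fun x => μ.real (Set.Ici x)) (Set.Ioi 0) := by
  simpa using integrableOn_measureReal_Ici_smul hμ (g := fun _ => (1 : ℝ)) stronglyMeasurable_const
    (fun _ => norm_one.le)

lemma integral_Ioi_measureReal_Ici (hμ : IntegrableOn (fun y => y) (Set.Ioi 0) μ) :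
    ∫ x in Set.Ioi 0, μ.real (Set.Ici x) = ∫ y in Set.Ioi 0, y ∂μ := by
  have h := integral_Ioi_measureReal_Ici_smul hμ (g := fun _ => (1 : ℝ)) stronglyMeasurable_const
    (fun _ => norm_one.le)
  simp only [smul_eq_mul, mul_one, setIntegral_const] at h
  rw [h]
  refine setIntegral_congr_fun measurableSet_Ioi fun y (hy : 0 < y) => ?_
  simp [hy.le]

lemma integral_Ioi_cexp_sub_one (hμ : IntegrableOn (fun y => y) (Set.Ioi 0) μ) (θ : ℝ) :
    ∫ y in Set.Ioi 0, (Complex.exp (Complex.I * θ * y) - 1) ∂μ =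
      ∫ x in Set.Ioi 0, μ.real (Set.Ici x) • (Complex.I * θ * Complex.exp (Complex.I * θ * x)) := by
  rw [integral_Ioi_measureReal_Ici_smul hμ (by fun_prop) fun x => (norm_I_mul_mul_cexp θ x).le]
  exact setIntegral_congr_fun measurableSet_Ioi fun y (hy : 0 < y) =>
    (integral_Ioc_mul_cexp _ hy.le).symm

lemma norm_integral_cexp_sub_one_sub_le {μ' : Measure ℝ}
    (hμ : IntegrableOn (fun y => y) (Set.Ioi 0) μ) (hμ' : IntegrableOn (fun y => y) (Set.Ioi 0) μ')
    (θ : ℝ) :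
    ‖∫ y in Set.Ioi 0, (Complex.exp (Complex.I * θ * y) - 1) ∂μ -
        ∫ y in Set.Ioi 0, (Complex.exp (Complex.I * θ * y) - 1) ∂μ'‖ ≤
      |θ| * ∫ x in Set.Ioi 0, |μ.real (Set.Ici x) - μ'.real (Set.Ici x)| := by
  have hbound (x : ℝ) := (norm_I_mul_mul_cexp θ x).le
  rw [integral_Ioi_cexp_sub_one hμ, integral_Ioi_cexp_sub_one hμ',
    ← integral_sub (integrableOn_measureReal_Ici_smul hμ (by fun_prop) hbound)
      (integrableOn_measureReal_Ici_smul hμ' (by fun_prop) hbound), ← integral_const_mul]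
  refine (norm_integral_le_integral_norm _).trans_eq (integral_congr_ae (.of_forall fun x => ?_))
  dsimp only
  rw [← sub_smul, norm_smul, norm_I_mul_mul_cexp, Real.norm_eq_abs, mul_comm]

lemma ae_restrict_Ioi_measure_singleton_eq_zero
    (hμ : IntegrableOn (fun y => y) (Set.Ioi 0) μ) :
    ∀ᵐ x ∂(volume.restrict (Set.Ioi 0)), μ {x} = 0 := by
  have := sigmaFinite_restrict_Ioi_of_integrableOn hμ
  filter_upwards [ae_restrict_mem measurableSet_Ioi,
    ae_restrict_of_ae (ae_measure_singleton_eq_zero (μ.restrict (Set.Ioi 0)) volume)] with x hx h0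
  rwa [Measure.restrict_apply' measurableSet_Ioi,
    Set.inter_eq_left.2 (Set.singleton_subset_iff.2 hx)] at h0

end Tail

section Empirical

variable {ι α : Type*} [MeasurableSpace α]

-- Negative weights are truncated to `0` by `ENNReal.ofReal`.
noncomputable def empiricalMeasure (s : Finset ι) (w : ι → ℝ) (a : ι → α) : Measure α :=
  ∑ i ∈ s, ENNReal.ofReal (w i) • Measure.dirac (a i)

variable [MeasurableSingletonClass α] {s : Finset ι} {w : ι → ℝ} {a : ι → α}
  {E : Type*} [NormedAddCommGroup E]

lemma integrable_empiricalMeasure (f : α → E) : Integrable f (empiricalMeasure s w a) :=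
  integrable_finsetSum_measure.2 fun _ _ =>
    (integrable_dirac enorm_lt_top).smul_measure ENNReal.ofReal_ne_top

variable [NormedSpace ℝ E] [CompleteSpace E]

lemma integral_empiricalMeasure (hw : ∀ i ∈ s, 0 ≤ w i) (f : α → E) :
    ∫ y, f y ∂(empiricalMeasure s w a) = ∑ i ∈ s, w i • f (a i) := by
  rw [empiricalMeasure, integral_finsetSum_measure fun _ _ =>
    (integrable_dirac enorm_lt_top).smul_measure ENNReal.ofReal_ne_top]
  refine Finset.sum_congr rfl fun i hi => ?_
  rw [integral_smul_measure, integral_dirac, ENNReal.toReal_ofReal (hw i hi)]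

lemma setIntegral_empiricalMeasure {t : Set α} (hw : ∀ i ∈ s, 0 ≤ w i) (ha : ∀ i ∈ s, a i ∈ t)
    (f : α → E) : ∫ y in t, f y ∂(empiricalMeasure s w a) = ∑ i ∈ s, w i • f (a i) := by
  rw [Measure.restrict_eq_self_of_ae_mem, integral_empiricalMeasure hw]
  simpa [ae_iff, empiricalMeasure, Measure.dirac_apply] using fun i hi => Or.inr (ha i hi)

lemma measureReal_Ici_empiricalMeasure (hw : ∀ i ∈ s, 0 ≤ w i) (a : ι → ℝ) (x : ℝ) :
    (empiricalMeasure s w a).real (Set.Ici x) = ∑ i ∈ s, w i * (if x ≤ a i then 1 else 0) := by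
  rw [← integral_indicator_one measurableSet_Ici, integral_empiricalMeasure hw]
  simp [Set.indicator_apply]

end Empirical

theorem empirical_levy_sum_tendsto_general
    (ν : Measure ℝ)
    (hmom : Integrable (fun y => y) ν)
    (lam r : ℕ → ℕ → ℝ)
    (hlam : ∀ n, ∀ j ∈ Icc 1 n, 0 ≤ lam n j)
    (hr : ∀ n, ∀ j ∈ Icc 1 n, 0 < r n j)
    (h1 : ∀ x : ℝ, 0 < x → ν {x} = 0 →
      Tendsto (fun n => ∑ j ∈ Icc 1 n, lam n j * (if x ≤ r n j then 1 else 0))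
        atTop (nhds ((ν (Set.Ici x)).toReal)))
    (h3 : Tendsto (fun n => ∑ j ∈ Icc 1 n, lam n j * r n j)
        atTop (nhds (∫ y in Set.Ioi (0 : ℝ), y ∂ν)))
    (θ : ℝ) :
    Tendsto
      (fun n => ∑ j ∈ Icc 1 n,
        (lam n j : ℂ) * (Complex.exp (Complex.I * θ * r n j) - 1))
      atTop
      (nhds (∫ y in Set.Ioi (0 : ℝ), (Complex.exp (Complex.I * θ * y) - 1) ∂ν)) := by
  set νn : ℕ → Measure ℝ := fun n => empiricalMeasure (Icc 1 n) (lam n) (r n)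
  have hν : IntegrableOn (fun y => y) (Set.Ioi 0) ν := hmom.integrableOn
  have hνn (n : ℕ) : IntegrableOn (fun y => y) (Set.Ioi 0) (νn n) :=
    (integrable_empiricalMeasure _).integrableOn
  have hsum (n : ℕ) : ∑ j ∈ Icc 1 n, (lam n j : ℂ) * (Complex.exp (Complex.I * θ * r n j) - 1) =
      ∫ y in Set.Ioi 0, (Complex.exp (Complex.I * θ * y) - 1) ∂(νn n) := by
    rw [setIntegral_empiricalMeasure (t := Set.Ioi 0) (hlam n) (hr n)]
    simp [Complex.real_smul]
  have hL1 : Tendsto (fun n => ∫ x in Set.Ioi 0, |(νn n).real (Set.Ici x) - ν.real (Set.Ici x)|)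
      atTop (𝓝 0) := by
    refine tendsto_integral_abs_sub_of_tendsto_integral
      (fun n => integrableOn_measureReal_Ici (hνn n)) (integrableOn_measureReal_Ici hν)
      (fun _ => .of_forall fun _ => measureReal_nonneg) ?_ ?_
    · filter_upwards [ae_restrict_mem measurableSet_Ioi,
        ae_restrict_Ioi_measure_singleton_eq_zero hν] with x hx h0
      simpa only [νn, measureReal_Ici_empiricalMeasure (hlam _), measureReal_def] using h1 x hx h0
    · have hmean (n : ℕ) :
          ∫ x in Set.Ioi 0, (νn n).real (Set.Ici x) = ∑ j ∈ Icc 1 n, lam n j * r n j := by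
        rw [integral_Ioi_measureReal_Ici (hνn n),
          setIntegral_empiricalMeasure (t := Set.Ioi 0) (hlam n) (hr n)]
        rfl
      simpa only [hmean, integral_Ioi_measureReal_Ici hν] using h3
  refine tendsto_iff_norm_sub_tendsto_zero.2 (squeeze_zero (fun _ => norm_nonneg _) (fun n => ?_)
    (by simpa using hL1.const_mul |θ|))
  rw [hsum n]
  exact norm_integral_cexp_sub_one_sub_le (hνn n) hν θ

/-- Convergence of empirical Lévy sums
`∑_j λ_{nj} (e^{iθ r_{nj}} - 1) → ∫_0^∞ (e^{iθy} - 1) ν(dy)`. -/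
theorem empirical_levy_sum_tendsto
    (ν : Measure ℝ) (hsupp : ν (Set.Iic 0) = 0)
    (hmom : Integrable (fun y => y) ν)
    (lam r : ℕ → ℕ → ℝ)
    (hlam : ∀ n, ∀ j ∈ Icc 1 n, 0 ≤ lam n j)
    (hr : ∀ n, ∀ j ∈ Icc 1 n, 0 < r n j)
    (h1 : ∀ x : ℝ, 0 < x → ν {x} = 0 →
      Tendsto (fun n => ∑ j ∈ Icc 1 n, lam n j * (if x ≤ r n j then 1 else 0))
        atTop (nhds ((ν (Set.Ici x)).toReal)))
    (h2 : ∀ x : ℝ, 0 < x → ν {x} = 0 →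
      Tendsto (fun n => ∑ j ∈ Icc 1 n, lam n j * r n j * (if x ≤ r n j then 1 else 0))
        atTop (nhds (∫ y in Set.Ici x, y ∂ν)))
    (h3 : Tendsto (fun n => ∑ j ∈ Icc 1 n, lam n j * r n j)
        atTop (nhds (∫ y in Set.Ioi (0 : ℝ), y ∂ν)))
    (θ : ℝ) :
    Tendsto
      (fun n => ∑ j ∈ Icc 1 n,
        (lam n j : ℂ) * (Complex.exp (Complex.I * θ * r n j) - 1))
      atTop
      (nhds (∫ y in Set.Ioi (0 : ℝ), (Complex.exp (Complex.I * θ * y) - 1) ∂ν)) :=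
  empirical_levy_sum_tendsto_general ν hmom lam r hlam hr h1 h3 θ
end

section
/- Let m ≥ 2 be an integer, let t_1 < t_2 < ⋯ < t_m be real numbers, let α ∈ ℝ, r ∈ ℝ, and θ_1, …, θ_m ∈ ℝ. Then ∑_{k=2}^{m} ∑_{1 ≤ l_1 < l_2 < ⋯ < l_k ≤ m} e^{−α(t_{l_k} − t_{l_1})} ∏_{p=1}^{k} (e^{i r θ_{l_p}} − 1) = ∑_{1 ≤ u < v ≤ m} e^{−α(t_v − t_u)} (e^{i r θ_u} − 1)(e^{i r θ_v} − 1) e^{i r (θ_{u+1} + θ_{u+2} + ⋯ + θ_{v−1})}, where the inner exponential on the right is 1 when v = u + 1. -/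
/-!
Writing `e^{i r θ_p} = 1 + g_p`, the exponential of the inner sum on the right expands as
`∏_{u < p < v} (1 + g_p) = ∑_{T ⊆ (u, v)} ∏_{p ∈ T} g_p`. The right side thus becomes a sum over
triples `(u, v, T)` with `u < v` and `T ⊆ (u, v)`, and `(u, v, T) ↦ {u, v} ∪ T` is a bijection
onto the subsets of `{1, …, m}` with at least two elements, with inverse
`S ↦ (min S, max S, S \ {min S, max S})`. The weight `e^{-α (t_{max S} - t_{min S})}` of `S` is
then the factor `e^{-α (t_v - t_u)}` of `(u, v, T)`.
-/

open Finset

namespace Finset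

variable {α M : Type*} [LinearOrder α] [LocallyFiniteOrder α]

theorem min_insert_insert_of_subset_Ioo {u v : α} {T : Finset α}
    (huv : u < v) (hT : T ⊆ Ioo u v) : (insert u (insert v T)).min = u := by
  have hle : (u : WithTop α) ≤ (insert v T).min :=
    Finset.le_min fun x hx => by
      rcases mem_insert.1 hx with rfl | hx
      · exact WithTop.coe_le_coe.2 huv.le
      · exact WithTop.coe_le_coe.2 (mem_Ioo.1 (hT hx)).1.le
  rw [min_insert, min_eq_left hle]

theorem max_insert_insert_of_subset_Ioo {u v : α} {T : Finset α}
    (huv : u < v) (hT : T ⊆ Ioo u v) : (insert u (insert v T)).max = v := by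
  have hle : (insert u T).max ≤ (v : WithBot α) :=
    Finset.max_le fun x hx => by
      rcases mem_insert.1 hx with rfl | hx
      · exact WithBot.coe_le_coe.2 huv.le
      · exact WithBot.coe_le_coe.2 (mem_Ioo.1 (hT hx)).2.le
  rw [insert_comm, max_insert, max_eq_left hle]

theorem right_notMem_of_subset_Ioo {u v : α} {T : Finset α} (hT : T ⊆ Ioo u v) : v ∉ T :=
  fun hv => (mem_Ioo.1 (hT hv)).2.false

theorem left_notMem_insert_of_subset_Ioo {u v : α} {T : Finset α}
    (huv : u < v) (hT : T ⊆ Ioo u v) : u ∉ insert v T := by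
  simp only [mem_insert, not_or]
  exact ⟨huv.ne, fun hu => (mem_Ioo.1 (hT hu)).1.false⟩

theorem erase_erase_insert_insert_of_subset_Ioo {u v : α} {T : Finset α}
    (huv : u < v) (hT : T ⊆ Ioo u v) : ((insert u (insert v T)).erase u).erase v = T := by
  rw [erase_insert (left_notMem_insert_of_subset_Ioo huv hT),
    erase_insert (right_notMem_of_subset_Ioo hT)]

theorem erase_erase_min'_max'_subset_Ioo (S : Finset α) (hne : S.Nonempty) :
    (S.erase (S.min' hne)).erase (S.max' hne) ⊆ Ioo (S.min' hne) (S.max' hne) := by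
  intro x hx
  simp only [mem_erase] at hx
  exact mem_Ioo.2 ⟨lt_of_le_of_ne (S.min'_le x hx.2.2) (Ne.symm hx.2.1),
    lt_of_le_of_ne (S.le_max' x hx.2.2) hx.1⟩

theorem sum_powerset_Icc_two_le_card [AddCommMonoid M] (a b : α) (f : Finset α → M) :
    ∑ S ∈ (Icc a b).powerset with 2 ≤ #S, f S
      = ∑ u ∈ Icc a b, ∑ v ∈ Ioc u b, ∑ T ∈ (Ioo u v).powerset, f (insert u (insert v T)) := by
  simp only [sum_sigma']
  symm
  refine sum_nbij (fun x => insert x.1 (insert x.2.1 x.2.2)) ?_ ?_ ?_ (fun _ _ => rfl)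
  · rintro ⟨u, v, T⟩ hx
    simp only [mem_sigma, mem_Icc, mem_Ioc, mem_powerset] at hx
    obtain ⟨⟨hau, hub⟩, ⟨huv, hvb⟩, hT⟩ := hx
    have hsub : insert u (insert v T) ⊆ Icc a b :=
      insert_subset (mem_Icc.2 ⟨hau, hub⟩) <| insert_subset (mem_Icc.2 ⟨by order, hvb⟩) <|
        hT.trans (Ioo_subset_Icc_self.trans (Icc_subset_Icc hau hvb))
    exact mem_filter.2 ⟨mem_powerset.2 hsub,
      one_lt_card.2 ⟨u, mem_insert_self _ _, v, mem_insert_of_mem (mem_insert_self _ _), huv.ne⟩⟩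
  · rintro ⟨u, v, T⟩ hx ⟨u', v', T'⟩ hx' h
    simp only [coe_sigma, Set.mem_sigma_iff, mem_coe, mem_Ioc, mem_powerset] at hx hx' h
    obtain ⟨-, ⟨huv, -⟩, hT⟩ := hx
    obtain ⟨-, ⟨huv', -⟩, hT'⟩ := hx'
    have hu : u = u' := WithTop.coe_injective <| by
      rw [← min_insert_insert_of_subset_Ioo huv hT, h, min_insert_insert_of_subset_Ioo huv' hT']
    have hv : v = v' := WithBot.coe_injective <| by
      rw [← max_insert_insert_of_subset_Ioo huv hT, h, max_insert_insert_of_subset_Ioo huv' hT']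
    subst hu hv
    have hT : T = T' := by
      rw [← erase_erase_insert_insert_of_subset_Ioo huv hT, h,
        erase_erase_insert_insert_of_subset_Ioo huv' hT']
    rw [hT]
  · intro S hS
    simp only [coe_filter, mem_powerset, Set.mem_ofPred_eq] at hS
    obtain ⟨hsub, hcard⟩ := hS
    have hne : S.Nonempty := card_pos.1 (by omega)
    have hlt : S.min' hne < S.max' hne := min'_lt_max'_of_card S hcard
    refine ⟨⟨S.min' hne, S.max' hne, (S.erase (S.min' hne)).erase (S.max' hne)⟩, ?_, ?_⟩
    · simp only [coe_sigma, Set.mem_sigma_iff, mem_coe, mem_Ioc, mem_powerset]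
      exact ⟨hsub (S.min'_mem hne), ⟨hlt, (mem_Icc.1 (hsub (S.max'_mem hne))).2⟩,
        erase_erase_min'_max'_subset_Ioo S hne⟩
    · dsimp only
      rw [insert_erase (mem_erase.2 ⟨hlt.ne', S.max'_mem hne⟩), insert_erase (S.min'_mem hne)]

theorem sum_Icc_sum_powersetCard {ι : Type*} [AddCommMonoid M] {s : Finset ι} {n : ℕ}
    (hs : #s = n) (j : ℕ) (f : Finset ι → M) :
    ∑ k ∈ Icc j n, ∑ S ∈ s.powersetCard k, f S = ∑ S ∈ s.powerset with j ≤ #S, f S := by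
  subst hs
  simp only [powersetCard_eq_filter]
  rw [sum_fiberwise_eq_sum_filter]
  refine sum_congr (filter_congr fun S hS => ?_) fun _ _ => rfl
  simp [card_le_card (mem_powerset.1 hS)]

theorem prod_eq_sum_powerset_prod_sub_one {ι R : Type*} [CommRing R] (s : Finset ι) (x : ι → R) :
    ∏ i ∈ s, x i = ∑ T ∈ s.powerset, ∏ i ∈ T, (x i - 1) := by
  simpa using prod_add_one (f := fun i => x i - 1) s

end Finset

/-- The sum over strictly increasing `k`-tuples `1 ≤ l_1 < ⋯ < l_k ≤ m` is encoded as a sum over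
`k`-element subsets `S` of `{1, …, m}`, with `l_1 = min S` and `l_k = max S`. -/
theorem on_off_superposition_identity_general
    (m : ℕ) (t : ℕ → ℝ)
    (α r : ℝ) (θ : ℕ → ℝ) :
    ∑ k ∈ Icc 2 m, ∑ S ∈ (Icc 1 m).powersetCard k,
      Complex.exp (-(α : ℂ) * ((t (S.max.unbotD 0) : ℂ) - (t (S.min.untopD 0) : ℂ)))
        * ∏ p ∈ S, (Complex.exp (Complex.I * r * θ p) - 1)
    = ∑ u ∈ Icc 1 m, ∑ v ∈ Icc (u + 1) m,
        Complex.exp (-(α : ℂ) * ((t v : ℂ) - (t u : ℂ)))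
          * (Complex.exp (Complex.I * r * θ u) - 1)
          * (Complex.exp (Complex.I * r * θ v) - 1)
          * Complex.exp (Complex.I * r * (∑ p ∈ Icc (u + 1) (v - 1), θ p : ℝ)) := by
  have hexp (u v : ℕ) : Complex.exp (Complex.I * r * (∑ p ∈ Icc (u + 1) (v - 1), θ p : ℝ))
      = ∑ T ∈ (Ioo u v).powerset, ∏ p ∈ T, (Complex.exp (Complex.I * r * θ p) - 1) := by
    rw [Icc_add_one_sub_one_eq_Ioo, Complex.ofReal_sum, mul_sum, Complex.exp_sum,
      prod_eq_sum_powerset_prod_sub_one]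
  rw [sum_Icc_sum_powersetCard (s := Icc 1 m) (by simp), sum_powerset_Icc_two_le_card]
  refine sum_congr rfl fun u _ => ?_
  rw [Icc_add_one_left_eq_Ioc]
  refine sum_congr rfl fun v hv => ?_
  rw [hexp, mul_sum]
  refine sum_congr rfl fun T hT => ?_
  have huv := (mem_Ioc.1 hv).1
  have hTuv := mem_powerset.1 hT
  rw [min_insert_insert_of_subset_Ioo huv hTuv, max_insert_insert_of_subset_Ioo huv hTuv,
    WithTop.untopD_coe, WithBot.unbotD_coe, prod_insert (left_notMem_insert_of_subset_Ioo huv hTuv),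
    prod_insert (right_notMem_of_subset_Ioo hTuv)]
  ring

/-- The algebraic identity for joint characteristic functions of
superpositions of Markovian ON/OFF sources. The sum over strictly increasing
`k`-tuples `1 ≤ l_1 < ⋯ < l_k ≤ m` is encoded as a sum over `k`-element subsets
`S` of `{1, …, m}`, with `l_1 = min S` and `l_k = max S`. -/
theorem on_off_superposition_identity
    (m : ℕ) (hm : 2 ≤ m) (t : ℕ → ℝ)
    (ht : ∀ i, 1 ≤ i → i < m → t i < t (i + 1))
    (α r : ℝ) (θ : ℕ → ℝ) :
    ∑ k ∈ Icc 2 m, ∑ S ∈ (Icc 1 m).powersetCard k,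
      Complex.exp (-(α : ℂ) * ((t (S.max.unbotD 0) : ℂ) - (t (S.min.untopD 0) : ℂ)))
        * ∏ p ∈ S, (Complex.exp (Complex.I * r * θ p) - 1)
    = ∑ u ∈ Icc 1 m, ∑ v ∈ Icc (u + 1) m,
        Complex.exp (-(α : ℂ) * ((t v : ℂ) - (t u : ℂ)))
          * (Complex.exp (Complex.I * r * θ u) - 1)
          * (Complex.exp (Complex.I * r * θ v) - 1)
          * Complex.exp (Complex.I * r * (∑ p ∈ Icc (u + 1) (v - 1), θ p : ℝ)) :=
  on_off_superposition_identity_general m t α r θ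
end

section
/- Let C : [0, ∞) → ℝ be any function, let n be a positive integer, t_1 ≤ t_2 ≤ ⋯ ≤ t_n real numbers, and θ_1, …, θ_n real. For 1 ≤ i ≤ j ≤ n define a_{ij} := C(t_j − t_i) − Ĉ(t_{j+1} − t_i) − Ĉ(t_j − t_{i−1}) + Ĉ(t_{j+1} − t_{i−1}), where any evaluation Ĉ whose argument involves the index 0 or n+1 (i.e. involves t_0 or t_{n+1}) is set equal to 0 (corresponding to t_0 = −∞, t_{n+1} = +∞ and lim_{t→∞} C(t) = 0), and otherwise Ĉ = C. Then ∑_{k=1}^n ∑_{l=1}^n θ_k θ_l C(|t_l − t_k|) = ∑_{1 ≤ i ≤ j ≤ n} (θ_i + ⋯ + θ_j)^2 · a_{ij}. -/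
open Finset


private lemma sum_Icc_bot (f : ℕ → ℝ) {i j : ℕ} (h : i ≤ j) :
    ∑ m ∈ Icc i j, f m = f i + ∑ m ∈ Icc (i + 1) j, f m := by
  rw [Finset.Icc_add_one_left_eq_Ioc, ← Finset.Ioc_insert_left h,
    Finset.sum_insert Finset.left_notMem_Ioc]

private lemma sum_Icc_top (f : ℕ → ℝ) {i j : ℕ} (h : i ≤ j) (hj : 1 ≤ j) :
    ∑ m ∈ Icc i j, f m = (∑ m ∈ Icc i (j - 1), f m) + f j := by
  obtain ⟨m, rfl⟩ : ∃ m, j = m + 1 := ⟨j - 1, by omega⟩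
  simp only [Nat.add_sub_cancel]
  exact Finset.sum_Icc_succ_top (by omega) f

private lemma shift_sum (n : ℕ) (g f : ℕ → ℝ) (h0 : g 0 = 0) (htop : f (n + 1) = 0) :
    ∑ j ∈ Icc 1 n, g j * f (j + 1) = ∑ j ∈ Icc 1 n, g (j - 1) * f j := by
  have key : ∑ j ∈ Icc 1 n, g j * f (j + 1) = ∑ j ∈ Icc 2 (n + 1), g (j - 1) * f j := by
    rw [show (2:ℕ) = 1 + 1 from rfl, ← Finset.map_add_right_Icc 1 n 1, Finset.sum_map]
    simp [addRightEmbedding]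
  rw [key]
  have e1 : ∑ j ∈ Icc 1 (n + 1), g (j - 1) * f j
      = g 0 * f 1 + ∑ j ∈ Icc 2 (n + 1), g (j - 1) * f j := by
    simpa using sum_Icc_bot (fun j => g (j - 1) * f j) (show 1 ≤ n + 1 by omega)
  have e2 : ∑ j ∈ Icc 1 (n + 1), g (j - 1) * f j
      = (∑ j ∈ Icc 1 n, g (j - 1) * f j) + g ((n+1) - 1) * f (n + 1) := by
    simpa using sum_Icc_top (fun j => g (j - 1) * f j) (show 1 ≤ n + 1 by omega) (by omega)
  rw [h0, zero_mul] at e1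
  rw [htop, mul_zero, add_zero] at e2
  linarith

private lemma shift_sum' (n : ℕ) (g f : ℕ → ℝ) (h0 : f 0 = 0) (htop : g (n + 1) = 0) :
    ∑ i ∈ Icc 1 n, g i * f (i - 1) = ∑ i ∈ Icc 1 n, g (i + 1) * f i := by
  have h := shift_sum n f g h0 htop
  calc ∑ i ∈ Icc 1 n, g i * f (i - 1) = ∑ i ∈ Icc 1 n, f (i - 1) * g i := by
        exact Finset.sum_congr rfl fun x _ => mul_comm _ _
    _ = ∑ i ∈ Icc 1 n, f i * g (i + 1) := h.symm
    _ = ∑ i ∈ Icc 1 n, g (i + 1) * f i := Finset.sum_congr rfl fun x _ => mul_comm _ _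

private def Gaux (θ : ℕ → ℝ) (i j : ℕ) : ℝ := (∑ m ∈ Icc i j, θ m) ^ 2

private def Faux (C : ℝ → ℝ) (n : ℕ) (t : ℕ → ℝ) (i j : ℕ) : ℝ :=
  if 1 ≤ i ∧ i ≤ j ∧ j ≤ n then C (t j - t i) else 0

private def Daux (θ : ℕ → ℝ) (i j : ℕ) : ℝ :=
  Gaux θ i j - Gaux θ i (j - 1) - Gaux θ (i + 1) j + Gaux θ (i + 1) (j - 1)

private lemma Gaux_zero (θ : ℕ → ℝ) {i j : ℕ} (h : j < i) : Gaux θ i j = 0 := by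
  simp [Gaux, Finset.Icc_eq_empty (by omega : ¬ i ≤ j)]

/-- The quadratic form of a stationary covariance function `C`
rewritten in coverage-process form, with boundary conventions `t 0 = -∞`,
`t (n+1) = +∞` and `lim_{s → ∞} C(s) = 0` (evaluations of `C` involving `t 0`
or `t (n+1)` are set to `0`). -/
theorem stationary_covariance_quadratic_form_rewrite
    (C : ℝ → ℝ) (n : ℕ) (hn : 0 < n) (t : ℕ → ℝ)
    (ht : ∀ i, 1 ≤ i → i < n → t i ≤ t (i + 1)) (θ : ℕ → ℝ)
    (a : ℕ → ℕ → ℝ)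
    (ha : ∀ i j, 1 ≤ i → i ≤ j → j ≤ n →
      a i j = C (t j - t i)
        - (if j = n then 0 else C (t (j + 1) - t i))
        - (if i = 1 then 0 else C (t j - t (i - 1)))
        + (if i = 1 ∨ j = n then 0 else C (t (j + 1) - t (i - 1)))) :
    ∑ k ∈ Icc 1 n, ∑ l ∈ Icc 1 n, θ k * θ l * C |t l - t k|
      = ∑ i ∈ Icc 1 n, ∑ j ∈ Icc i n, (∑ m ∈ Icc i j, θ m) ^ 2 * a i j := by
  set F := Faux C n t with hF
  set G := Gaux θ with hG
  set D := Daux θ with hD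
  have hFtop : ∀ i, F i (n + 1) = 0 := fun i => by
    simp only [hF, Faux]; exact if_neg (by omega)
  have hFbot : ∀ j, F 0 j = 0 := fun j => by
    simp only [hF, Faux]; exact if_neg (by omega)
  have hmono : ∀ i j : ℕ, 1 ≤ i → i ≤ j → j ≤ n → t i ≤ t j := by
    intro i j hi hij hj
    induction j with
    | zero => omega
    | succ m ih =>
      rcases Nat.eq_or_lt_of_le hij with h | h
      · rw [h]
      · have h1 : t i ≤ t m := ih (by omega) (by omega)
        have h2 : t m ≤ t (m + 1) := ht m (by omega) (by omega)
        linarith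
  -- Step 1: replace a by F-combination, over the full square
  have step1 : ∑ i ∈ Icc 1 n, ∑ j ∈ Icc i n, G i j * a i j
      = ∑ i ∈ Icc 1 n, ∑ j ∈ Icc 1 n,
          G i j * (F i j - F i (j + 1) - F (i - 1) j + F (i - 1) (j + 1)) := by
    apply Finset.sum_congr rfl
    intro i hi
    rw [Finset.mem_Icc] at hi
    rw [Finset.sum_subset (Finset.Icc_subset_Icc_left hi.1)
      (fun j hj hnot => by
        have : j < i := by
          simp only [Finset.mem_Icc] at hj hnot; omega
        rw [hG, Gaux_zero θ this, zero_mul])]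
    apply Finset.sum_congr rfl
    intro j hj
    rw [Finset.mem_Icc] at hj
    rcases le_or_gt i j with hij | hij
    · rw [ha i j hi.1 hij hj.2]
      congr 1
      have hFij : F i j = C (t j - t i) := by
        simp only [hF, Faux]; exact if_pos ⟨hi.1, hij, hj.2⟩
      have hFij1 : F i (j + 1) = if j = n then 0 else C (t (j + 1) - t i) := by
        by_cases h : j = n
        · rw [if_pos h, h, hFtop]
        · rw [if_neg h]; simp only [hF, Faux]
          exact if_pos ⟨hi.1, by omega, by omega⟩
      have hFi1j : F (i - 1) j = if i = 1 then 0 else C (t j - t (i - 1)) := by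
        by_cases h : i = 1
        · rw [if_pos h, h]; exact hFbot j
        · rw [if_neg h]; simp only [hF, Faux]
          exact if_pos ⟨by omega, by omega, hj.2⟩
      have hFi1j1 : F (i - 1) (j + 1) = if i = 1 ∨ j = n then 0 else C (t (j + 1) - t (i - 1)) := by
        by_cases h : i = 1 ∨ j = n
        · rw [if_pos h]
          rcases h with h | h
          · rw [h]; exact hFbot _
          · rw [h]
            have : i - 1 = 0 ∨ ¬ (n + 1 ≤ n) := Or.inr (by omega)
            simp only [hF, Faux]; exact if_neg (by omega)
        · rw [if_neg h]; push_neg at h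
          simp only [hF, Faux]
          exact if_pos ⟨by omega, by omega, by omega⟩
      rw [hFij, hFij1, hFi1j, hFi1j1]
    · rw [hG, Gaux_zero θ hij, zero_mul, zero_mul]
  -- Step 2: Abel summation in j (inner)
  have step2 : ∀ i ∈ Icc 1 n,
      ∑ j ∈ Icc 1 n, G i j * (F i j - F i (j + 1) - F (i - 1) j + F (i - 1) (j + 1))
      = ∑ j ∈ Icc 1 n, (G i j - G i (j - 1)) * (F i j - F (i - 1) j) := by
    intro i hi
    rw [Finset.mem_Icc] at hi
    have e1 : ∀ j, G i j * (F i j - F i (j + 1) - F (i - 1) j + F (i - 1) (j + 1))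
        = G i j * (F i j - F (i - 1) j) - G i j * ((fun j => F i j - F (i - 1) j) (j + 1)) := by
      intro j; simp only; ring
    simp only [e1]
    rw [Finset.sum_sub_distrib]
    rw [shift_sum n (G i) (fun j => F i j - F (i - 1) j)
      (by rw [hG]; exact Gaux_zero θ (by omega))
      (by simp only [hFtop]; ring)]
    rw [← Finset.sum_sub_distrib]
    apply Finset.sum_congr rfl
    intro j _
    ring
  -- Step 3: Abel summation in i (after swapping)
  have step3 : ∀ j ∈ Icc 1 n,
      ∑ i ∈ Icc 1 n, (G i j - G i (j - 1)) * (F i j - F (i - 1) j)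
      = ∑ i ∈ Icc 1 n, D i j * F i j := by
    intro j hj
    rw [Finset.mem_Icc] at hj
    have e1 : ∀ i : ℕ, (G i j - G i (j - 1)) * (F i j - F (i - 1) j)
        = (G i j - G i (j - 1)) * F i j - (G i j - G i (j - 1)) * F (i - 1) j := by
      intro i; ring
    simp only [e1]
    rw [Finset.sum_sub_distrib]
    rw [shift_sum' n (fun i => G i j - G i (j - 1)) (fun i => F i j)
      (hFbot j)
      (by simp only [hG]; rw [Gaux_zero θ (by omega), Gaux_zero θ (by omega)]; ring)]
    rw [← Finset.sum_sub_distrib]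
    apply Finset.sum_congr rfl
    intro i _
    simp only [hD, Daux]
    ring
  -- combine: RHS = ∑∑ D i j * F i j
  have rhs_eq : ∑ i ∈ Icc 1 n, ∑ j ∈ Icc i n, (∑ m ∈ Icc i j, θ m) ^ 2 * a i j
      = ∑ i ∈ Icc 1 n, ∑ j ∈ Icc 1 n, D i j * F i j := by
    calc ∑ i ∈ Icc 1 n, ∑ j ∈ Icc i n, (∑ m ∈ Icc i j, θ m) ^ 2 * a i j
        = ∑ i ∈ Icc 1 n, ∑ j ∈ Icc i n, G i j * a i j := rfl
      _ = ∑ i ∈ Icc 1 n, ∑ j ∈ Icc 1 n,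
            G i j * (F i j - F i (j + 1) - F (i - 1) j + F (i - 1) (j + 1)) := step1
      _ = ∑ i ∈ Icc 1 n, ∑ j ∈ Icc 1 n, (G i j - G i (j - 1)) * (F i j - F (i - 1) j) :=
            Finset.sum_congr rfl step2
      _ = ∑ j ∈ Icc 1 n, ∑ i ∈ Icc 1 n, (G i j - G i (j - 1)) * (F i j - F (i - 1) j) :=
            Finset.sum_comm
      _ = ∑ j ∈ Icc 1 n, ∑ i ∈ Icc 1 n, D i j * F i j := Finset.sum_congr rfl step3
      _ = ∑ i ∈ Icc 1 n, ∑ j ∈ Icc 1 n, D i j * F i j := Finset.sum_comm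
  rw [rhs_eq]
  -- Step 4: symmetrization + pointwise identification
  have key : ∀ i j : ℕ, 1 ≤ i → i ≤ j → j ≤ n →
      D i j * F i j + D j i * F j i
      = θ i * θ j * C |t j - t i| + θ j * θ i * C |t i - t j| := by
    intro i j hi hij hj
    rcases Nat.eq_or_lt_of_le hij with rfl | hlt
    · have hFii : F i i = C (t i - t i) := by
        simp only [hF, Faux]; exact if_pos ⟨hi, le_refl _, hj⟩
      have hDii : D i i = θ i ^ 2 := by
        simp only [hD, Daux, hG]
        rw [Gaux_zero θ (show i - 1 < i by omega), Gaux_zero θ (show i < i + 1 by omega),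
          Gaux_zero θ (show i - 1 < i + 1 by omega)]
        simp [Gaux]
      rw [hFii, hDii, sub_self, abs_zero]
      ring
    · have hFji : F j i = 0 := by
        simp only [hF, Faux]; exact if_neg (by omega)
      have hFij : F i j = C (t j - t i) := by
        simp only [hF, Faux]; exact if_pos ⟨hi, hij, hj⟩
      have habs : |t j - t i| = t j - t i :=
        abs_of_nonneg (by linarith [hmono i j hi hij hj])
      have habs2 : |t i - t j| = t j - t i := by rw [abs_sub_comm]; exact habs
      have e1 : ∑ m ∈ Icc i j, θ m = θ i + ((∑ m ∈ Icc (i + 1) (j - 1), θ m) + θ j) := by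
        rw [sum_Icc_bot θ hij, sum_Icc_top θ (by omega) (by omega)]
      have e2 : ∑ m ∈ Icc i (j - 1), θ m = θ i + ∑ m ∈ Icc (i + 1) (j - 1), θ m :=
        sum_Icc_bot θ (by omega)
      have e3 : ∑ m ∈ Icc (i + 1) j, θ m = (∑ m ∈ Icc (i + 1) (j - 1), θ m) + θ j :=
        sum_Icc_top θ (by omega) (by omega)
      rw [hFji, hFij, habs, habs2]
      simp only [hD, Daux, hG, Gaux]
      rw [e1, e2, e3]
      ring
  have sym1 : ∑ i ∈ Icc 1 n, ∑ j ∈ Icc 1 n, D i j * F i j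
      = ∑ i ∈ Icc 1 n, ∑ j ∈ Icc 1 n, D j i * F j i := Finset.sum_comm
  have sym2 : ∑ k ∈ Icc 1 n, ∑ l ∈ Icc 1 n, θ k * θ l * C |t l - t k|
      = ∑ k ∈ Icc 1 n, ∑ l ∈ Icc 1 n, θ l * θ k * C |t k - t l| := Finset.sum_comm
  have main2 : (2:ℝ) * (∑ k ∈ Icc 1 n, ∑ l ∈ Icc 1 n, θ k * θ l * C |t l - t k|)
      = (2:ℝ) * (∑ i ∈ Icc 1 n, ∑ j ∈ Icc 1 n, D i j * F i j) := by
    have lhs2 : (2:ℝ) * (∑ k ∈ Icc 1 n, ∑ l ∈ Icc 1 n, θ k * θ l * C |t l - t k|)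
        = ∑ k ∈ Icc 1 n, ∑ l ∈ Icc 1 n,
            (θ k * θ l * C |t l - t k| + θ l * θ k * C |t k - t l|) := by
      rw [two_mul]
      nth_rewrite 2 [sym2]
      rw [← Finset.sum_add_distrib]
      apply Finset.sum_congr rfl; intro k _
      rw [← Finset.sum_add_distrib]
    have rhs2 : (2:ℝ) * (∑ i ∈ Icc 1 n, ∑ j ∈ Icc 1 n, D i j * F i j)
        = ∑ i ∈ Icc 1 n, ∑ j ∈ Icc 1 n, (D i j * F i j + D j i * F j i) := by
      rw [two_mul]
      nth_rewrite 2 [sym1]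
      rw [← Finset.sum_add_distrib]
      apply Finset.sum_congr rfl; intro i _
      rw [← Finset.sum_add_distrib]
    rw [lhs2, rhs2]
    apply Finset.sum_congr rfl
    intro i hi
    apply Finset.sum_congr rfl
    intro j hj
    rw [Finset.mem_Icc] at hi hj
    rcases le_total i j with h | h
    · rw [key i j hi.1 h hj.2]
    · have := key j i hj.1 h hi.2
      linarith
  linarith
end

section
/- Let (Ω, 𝓕, P) be a probability space, n a positive integer, ψ : ℝ → ℂ a function, and a_{ij} ∈ ℝ for 1 ≤ i ≤ j ≤ n. Let (Z_{ij})_{1 ≤ i ≤ j ≤ n} be an independent family of real-valued random variables on Ω such that for each pair i ≤ j and every θ ∈ ℝ, E[e^{i θ Z_{ij}}] = exp(a_{ij} ψ(θ)). Define Y_k := ∑_{1 ≤ i ≤ k, k ≤ j ≤ n} Z_{ij} for k = 1, …, n. Then for all real θ_1, …, θ_n: E[exp(i ∑_{k=1}^n θ_k Y_k)] = exp( ∑_{1 ≤ i ≤ j ≤ n} a_{ij} ψ(θ_i + ⋯ + θ_j) ). -/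
/-!
Each `Z i j` enters `Y k` exactly for `i ≤ k ≤ j`, so regrouping gives
`∑ₖ θₖ Yₖ = ∑_{i ≤ j} (θ_i + ⋯ + θ_j) Z_{ij}`. By independence the characteristic function of
this sum is the product of those of the summands, i.e. of the `exp (a_{ij} ψ (θ_i + ⋯ + θ_j))`.
-/

open Finset MeasureTheory ProbabilityTheory

theorem sum_Icc_mul_sum_Icc_sum_Icc {α R : Type*} [Preorder α] [LocallyFiniteOrder α]
    [NonUnitalNonAssocSemiring R] (a b : α) (θ : α → R) (z : α → α → R) :
    ∑ k ∈ Icc a b, θ k * ∑ i ∈ Icc a k, ∑ j ∈ Icc k b, z i j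
      = ∑ i ∈ Icc a b, ∑ j ∈ Icc i b, (∑ m ∈ Icc i j, θ m) * z i j := by
  simp_rw [mul_sum, sum_mul]
  rw [sum_comm' (t' := Icc a b) (s' := fun i => Icc i b) fun k i => by
    simp only [mem_Icc]
    exact ⟨fun ⟨⟨_, hkb⟩, hai, hik⟩ => ⟨⟨hik, hkb⟩, hai, hik.trans hkb⟩,
      fun ⟨⟨hik, hkb⟩, hai, _⟩ => ⟨⟨hai.trans hik, hkb⟩, hai, hik⟩⟩]
  refine sum_congr rfl fun i _ => sum_comm' fun k j => ?_
  simp only [mem_Icc]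
  exact ⟨fun ⟨⟨hik, _⟩, hkj, hjb⟩ => ⟨⟨hik, hkj⟩, hik.trans hkj, hjb⟩,
    fun ⟨⟨hik, hkj⟩, _, hjb⟩ => ⟨⟨hik, hkj.trans hjb⟩, hkj, hjb⟩⟩

theorem sum_Icc_sum_Icc_eq_sum_subtype {M : Type*} [AddCommMonoid M] (n : ℕ)
    (f : ℕ → ℕ → M) :
    ∑ i ∈ Icc 1 n, ∑ j ∈ Icc i n, f i j
      = ∑ q ∈ (Icc 1 n ×ˢ Icc 1 n).subtype
          (fun p : ℕ × ℕ => 1 ≤ p.1 ∧ p.1 ≤ p.2 ∧ p.2 ≤ n), f q.1.1 q.1.2 := by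
  rw [sum_subtype_eq_sum_filter (fun p : ℕ × ℕ => f p.1 p.2),
    sum_finset_product' _ (Icc 1 n) (fun i => Icc i n) fun p => by
      simp only [mem_filter, mem_product, mem_Icc]; omega]

theorem ProbabilityTheory.iIndepFun.integral_fun_finset_prod_comp {Ω ι 𝕜 : Type*}
    [MeasurableSpace Ω] {μ : Measure Ω} [RCLike 𝕜] {𝓧 : ι → Type*}
    {m𝓧 : ∀ i, MeasurableSpace (𝓧 i)} {X : (i : ι) → Ω → 𝓧 i} {f : (i : ι) → 𝓧 i → 𝕜}
    (hX : iIndepFun X μ) (mX : ∀ i, AEMeasurable (X i) μ)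
    (hf : ∀ i, AEStronglyMeasurable (f i) (μ.map (X i))) (s : Finset ι) :
    ∫ ω, ∏ i ∈ s, f i (X i ω) ∂μ = ∏ i ∈ s, ∫ ω, f i (X i ω) ∂μ := by
  simp_rw [← prod_coe_sort s]
  exact (hX.precomp Subtype.val_injective).integral_fun_prod_comp (fun i => mX i) fun i => hf i

theorem ProbabilityTheory.iIndepFun.integral_exp_I_mul_finset_sum {Ω ι : Type*}
    [MeasurableSpace Ω] {μ : Measure Ω} {X : ι → Ω → ℝ} (hX : iIndepFun X μ)
    (mX : ∀ i, AEMeasurable (X i) μ) (s : Finset ι) (t : ι → ℝ) :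
    ∫ ω, Complex.exp (Complex.I * (∑ i ∈ s, t i * X i ω : ℝ)) ∂μ
      = ∏ i ∈ s, ∫ ω, Complex.exp (Complex.I * t i * X i ω) ∂μ := by
  have hf : ∀ i, Measurable fun x : ℝ => Complex.exp (Complex.I * t i * x) := fun i => by
    fun_prop
  rw [← hX.integral_fun_finset_prod_comp mX (fun i => (hf i).aestronglyMeasurable) s]
  simp_rw [Complex.ofReal_sum, mul_sum, Complex.exp_sum, Complex.ofReal_mul, mul_assoc]

theorem joint_char_function_of_triangular_sums_general
    {Ω : Type*} [MeasurableSpace Ω] (P : Measure Ω)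
    (n : ℕ) (ψ : ℝ → ℂ) (a : ℕ → ℕ → ℝ)
    (Z : ℕ → ℕ → Ω → ℝ)
    (hmeas : ∀ i j, Measurable (Z i j))
    (hindep : iIndepFun
      (fun p : {p : ℕ × ℕ // 1 ≤ p.1 ∧ p.1 ≤ p.2 ∧ p.2 ≤ n} => Z p.1.1 p.1.2) P)
    (hchar : ∀ i j, 1 ≤ i → i ≤ j → j ≤ n → ∀ θ : ℝ,
      ∫ ω, Complex.exp (Complex.I * θ * Z i j ω) ∂P
        = Complex.exp ((a i j : ℂ) * ψ θ))
    (Y : ℕ → Ω → ℝ)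
    (hY : ∀ k ω, Y k ω = ∑ i ∈ Icc 1 k, ∑ j ∈ Icc k n, Z i j ω)
    (θ : ℕ → ℝ) :
    ∫ ω, Complex.exp (Complex.I * (∑ k ∈ Icc 1 n, θ k * Y k ω : ℝ)) ∂P
      = Complex.exp (∑ i ∈ Icc 1 n, ∑ j ∈ Icc i n,
          (a i j : ℂ) * ψ (∑ m ∈ Icc i j, θ m)) := by
  simp_rw [hY, sum_Icc_mul_sum_Icc_sum_Icc, sum_Icc_sum_Icc_eq_sum_subtype,
    hindep.integral_exp_I_mul_finset_sum (fun q => (hmeas _ _).aemeasurable),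
    Complex.exp_sum]
  exact prod_congr rfl fun q _ => hchar _ _ q.2.1 q.2.2.1 q.2.2.2 _

/-- Joint characteristic function of `Y_k = ∑_{i ≤ k ≤ j} Z_{ij}`,
for an independent family `(Z_{ij})_{1 ≤ i ≤ j ≤ n}` with
`E[e^{iθ Z_{ij}}] = exp(a_{ij} ψ(θ))`. -/
theorem joint_char_function_of_triangular_sums
    {Ω : Type*} [MeasurableSpace Ω] (P : Measure Ω) [IsProbabilityMeasure P]
    (n : ℕ) (hn : 0 < n) (ψ : ℝ → ℂ) (a : ℕ → ℕ → ℝ)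
    (Z : ℕ → ℕ → Ω → ℝ)
    (hmeas : ∀ i j, Measurable (Z i j))
    (hindep : iIndepFun
      (fun p : {p : ℕ × ℕ // 1 ≤ p.1 ∧ p.1 ≤ p.2 ∧ p.2 ≤ n} => Z p.1.1 p.1.2) P)
    (hchar : ∀ i j, 1 ≤ i → i ≤ j → j ≤ n → ∀ θ : ℝ,
      ∫ ω, Complex.exp (Complex.I * θ * Z i j ω) ∂P
        = Complex.exp ((a i j : ℂ) * ψ θ))
    (Y : ℕ → Ω → ℝ)
    (hY : ∀ k ω, Y k ω = ∑ i ∈ Icc 1 k, ∑ j ∈ Icc k n, Z i j ω)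
    (θ : ℕ → ℝ) :
    ∫ ω, Complex.exp (Complex.I * (∑ k ∈ Icc 1 n, θ k * Y k ω : ℝ)) ∂P
      = Complex.exp (∑ i ∈ Icc 1 n, ∑ j ∈ Icc i n,
          (a i j : ℂ) * ψ (∑ m ∈ Icc i j, θ m)) :=
  joint_char_function_of_triangular_sums_general P n ψ a Z hmeas hindep hchar Y hY θ
end
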